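/- The constrained minimal specific energy of the two-dimensional Euclid's hat equals −1/2; that is, the infimum over all integers n ≥ 2, all points x₁, …, xₙ ∈ ℝ² and all charges σ₁, …, σₙ ∈ {−1, 1} with non-zero net charge ∑_{j=1}^{n} σⱼ ≠ 0, of (1/(n−1))·∑_{1 ≤ i < j ≤ n} σᵢ σⱼ h(|xᵢ − xⱼ|), is equal to −1/2. -/

import Mathlib

open Real

/-- The two-dimensional Euclid's hat function:
`h w = (2/π)(arccos w − w√(1−w²))` for `0 ≤ w ≤ 1` and `h w = 0` for `w > 1`. -/
noncomputable def euclidHat (w : ℝ) : ℝ :=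
  if w ≤ 1 then (2 / π) * (Real.arccos w - w * Real.sqrt (1 - w ^ 2)) else 0

/-!
`(π / 4) · h(|x - y|)` is the area of the intersection of the discs of radius `1/2` centred at
`x` and `y`. So for `f = ∑ⱼ σⱼ 𝟙_{B(xⱼ, 1/2)}` we get `∫ f = (π / 4) ∑ⱼ σⱼ` and
`∫ f² = (π / 4) ∑ᵢ ∑ⱼ σᵢ σⱼ h(|xᵢ - xⱼ|)`. As `f` is integer-valued, `|f| ≤ f²`, whence
`∑ᵢ ∑ⱼ σᵢ σⱼ h(|xᵢ - xⱼ|) ≥ |∑ⱼ σⱼ| ≥ 1`; removing the `n` diagonal terms and halving gives the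
bound `-1/2`. Three coincident charges `+1, -1, +1` attain it.
-/

open MeasureTheory Metric Set

theorem integral_sqrt_one_sub_sq_of_le {w : ℝ} (hw₀ : -1 ≤ w) (hw₁ : w ≤ 1) :
    ∫ s in w..1, √(1 - s ^ 2) = (arccos w - w * √(1 - w ^ 2)) / 2 := by
  have hsin : ∀ θ ∈ uIcc (arccos w) 0, √(1 - cos θ ^ 2) * -sin θ = -sin θ ^ 2 := by
    intro θ hθ
    rw [uIcc_of_ge (arccos_nonneg w)] at hθ
    rw [← sin_sq, sqrt_sq (sin_nonneg_of_nonneg_of_le_pi hθ.1 (hθ.2.trans (arccos_le_pi w)))]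
    ring
  calc ∫ s in w..1, √(1 - s ^ 2)
      = ∫ s in cos (arccos w)..cos 0, √(1 - s ^ 2) := by rw [cos_arccos hw₀ hw₁, cos_zero]
    _ = ∫ θ in arccos w..0, √(1 - cos θ ^ 2) * -sin θ :=
        (intervalIntegral.integral_comp_mul_deriv (fun θ _ => hasDerivAt_cos θ) (by fun_prop)
          (by fun_prop)).symm
    _ = ∫ θ in (0 : ℝ)..arccos w, sin θ ^ 2 := by
        rw [intervalIntegral.integral_congr hsin, intervalIntegral.integral_neg,
          intervalIntegral.integral_symm, neg_neg]
    _ = (arccos w - w * √(1 - w ^ 2)) / 2 := by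
        rw [integral_sin_sq, sin_arccos, cos_arccos hw₀ hw₁, sin_zero, cos_zero]
        ring

theorem euclidHat_eq_integral {w : ℝ} (hw₀ : -1 ≤ w) (hw₁ : w ≤ 1) :
    euclidHat w = 4 / π * ∫ s in w..1, √(1 - s ^ 2) := by
  rw [euclidHat, if_pos hw₁, integral_sqrt_one_sub_sq_of_le hw₀ hw₁]
  ring

theorem euclidHat_zero : euclidHat 0 = 1 := by
  rw [euclidHat, if_pos zero_le_one, arccos_zero]
  field_simp [pi_ne_zero]
  simp

theorem euclidHat_of_one_lt {w : ℝ} (hw : 1 < w) : euclidHat w = 0 :=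
  if_neg hw.not_ge

theorem volume_setOf_sq_le (c : ℝ) : volume {b : ℝ | b ^ 2 ≤ c} = ENNReal.ofReal (2 * √c) := by
  rcases lt_or_ge c 0 with hc | hc
  · have hempty : {b : ℝ | b ^ 2 ≤ c} = ∅ :=
      eq_empty_of_forall_notMem fun b (hb : b ^ 2 ≤ c) => by nlinarith [sq_nonneg b]
    simp [hempty, sqrt_eq_zero_of_nonpos hc.le]
  · rw [show {b : ℝ | b ^ 2 ≤ c} = Icc (-√c) √c from ext fun b => sq_le hc, Real.volume_Icc]
    ring_nf

def lens (w : ℝ) : Set (ℝ × ℝ) :=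
  {p | (p.1 + w / 2) ^ 2 + p.2 ^ 2 ≤ 1 / 4 ∧ (p.1 - w / 2) ^ 2 + p.2 ^ 2 ≤ 1 / 4}

theorem measurableSet_lens (w : ℝ) : MeasurableSet (lens w) := by
  rw [lens, ofPred_and]
  exact (measurableSet_le (by fun_prop) (by fun_prop)).inter
    (measurableSet_le (by fun_prop) (by fun_prop))

theorem volume_slice_lens {w : ℝ} (hw : 0 ≤ w) (a : ℝ) :
    volume (Prod.mk a ⁻¹' lens w) = ENNReal.ofReal (√(1 - (2 * |a| + w) ^ 2)) := by
  have hmax : (a + w / 2) ^ 2 ⊔ (a - w / 2) ^ 2 = (|a| + w / 2) ^ 2 := by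
    rcases le_total 0 a with ha | ha
    · rw [abs_of_nonneg ha, max_eq_left (by nlinarith)]
    · rw [abs_of_nonpos ha, max_eq_right (by nlinarith)]
      ring
  have hslice : Prod.mk a ⁻¹' lens w = {b | b ^ 2 ≤ 1 / 4 - (|a| + w / 2) ^ 2} := by
    ext b
    rw [mem_preimage, lens, mem_ofPred_eq, mem_ofPred_eq, ← hmax, le_sub_comm, max_le_iff,
      le_sub_iff_add_le, le_sub_iff_add_le]
  rw [hslice, volume_setOf_sq_le,
    show 1 - (2 * |a| + w) ^ 2 = 2 ^ 2 * (1 / 4 - (|a| + w / 2) ^ 2) by ring,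
    sqrt_mul (by norm_num), sqrt_sq zero_le_two]

theorem volume_lens {w : ℝ} (hw₀ : 0 ≤ w) (hw₁ : w ≤ 1) :
    volume (lens w) = ENNReal.ofReal (∫ s in w..1, √(1 - s ^ 2)) := by
  set g : ℝ → ℝ := fun t => √(1 - (2 * t + w) ^ 2)
  have hg_zero (t : ℝ) (ht : (1 - w) / 2 < t) : g t = 0 := sqrt_eq_zero_of_nonpos (by nlinarith)
  have hg_int : Integrable (fun a => g |a|) := by
    refine (by fun_prop : Continuous _).integrable_of_hasCompactSupport
      (HasCompactSupport.intro (isCompact_Icc (a := -1) (b := 1)) fun a ha => hg_zero _ ?_)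
    rw [mem_Icc, ← abs_le, not_le] at ha
    linarith
  have hg_Ioi : ∫ t in Ioi 0, g t = ∫ t in (0)..(1 - w) / 2, g t := by
    rw [intervalIntegral.integral_of_le (by linarith)]
    exact setIntegral_eq_of_subset_of_forall_sdiff_eq_zero measurableSet_Ioi Ioc_subset_Ioi_self
      fun t ht => hg_zero t (not_le.1 fun h => ht.2 ⟨ht.1, h⟩)
  rw [Measure.volume_eq_prod, Measure.prod_apply (measurableSet_lens w),
    lintegral_congr (volume_slice_lens hw₀),
    ← ofReal_integral_eq_lintegral_ofReal hg_int (.of_forall fun _ => sqrt_nonneg _),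
    integral_comp_abs (f := g), hg_Ioi,
    intervalIntegral.integral_comp_mul_add (f := fun s => √(1 - s ^ 2)) two_ne_zero,
    mul_zero, zero_add, show 2 * ((1 - w) / 2) + w = 1 by ring, smul_eq_mul, ← mul_assoc,
    mul_inv_cancel₀ two_ne_zero, one_mul]

section InnerProductSpace

variable {E : Type*} [NormedAddCommGroup E] [InnerProductSpace ℝ E] [FiniteDimensional ℝ E]
  [MeasurableSpace E] [BorelSpace E]

theorem volume_closedBall_inter_closedBall_congr {x y x' y' : E} (h : dist x y = dist x' y')
    (r s : ℝ) :
    volume (closedBall x r ∩ closedBall y s) = volume (closedBall x' r ∩ closedBall y' s) := by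
  obtain ⟨ψ, hψ⟩ : ∃ ψ : E ≃ₗᵢ[ℝ] E, ψ (y - x) = y' - x' :=
    ⟨_, Submodule.reflection_sub (by rwa [← dist_eq_norm, ← dist_eq_norm, dist_comm, dist_comm y'])⟩
  set φ : E → E := fun u => x' + ψ (u - x)
  have hφ : Isometry φ := Isometry.of_dist_eq fun u v => by
    rw [dist_eq_norm, dist_eq_norm, add_sub_add_left_eq_sub, ← map_sub, ψ.norm_map,
      sub_sub_sub_cancel_right]
  have hφ_mp : MeasurePreserving φ := (measurePreserving_add_left volume x').comp
    (ψ.measurePreserving.comp (measurePreserving_sub_right volume x))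
  have hφx : φ x = x' := by simp [φ]
  have hφy : φ y = y' := by simp only [φ, hψ, add_sub_cancel]
  have hpre : φ ⁻¹' (closedBall x' r ∩ closedBall y' s) = closedBall x r ∩ closedBall y s := by
    rw [preimage_inter, ← hφx, ← hφy, hφ.preimage_closedBall, hφ.preimage_closedBall]
  rw [← hpre, hφ_mp.measure_preimage
    (measurableSet_closedBall.inter measurableSet_closedBall).nullMeasurableSet]

end InnerProductSpace

theorem EuclideanSpace.mem_closedBall_fin_two {u c : EuclideanSpace ℝ (Fin 2)} {r : ℝ}
    (hr : 0 ≤ r) : u ∈ closedBall c r ↔ (u 0 - c 0) ^ 2 + (u 1 - c 1) ^ 2 ≤ r ^ 2 := by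
  rw [mem_closedBall, EuclideanSpace.dist_eq, Fin.sum_univ_two, Real.dist_eq, Real.dist_eq,
    sq_abs, sq_abs, sqrt_le_left hr]

theorem volume_closedBall_inter_closedBall_fin_two {x y : EuclideanSpace ℝ (Fin 2)}
    (h : dist x y ≤ 1) :
    volume (closedBall x (1 / 2) ∩ closedBall y (1 / 2)) =
      ENNReal.ofReal (∫ s in dist x y..1, √(1 - s ^ 2)) := by
  set w := dist x y
  have hdist : dist !₂[-(w / 2), 0] !₂[w / 2, 0] = w := by
    rw [EuclideanSpace.dist_eq, Fin.sum_univ_two]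
    simp only [Real.dist_eq, sq_abs, Matrix.cons_val_zero, Matrix.cons_val_one]
    rw [show (-(w / 2) - w / 2) ^ 2 + (0 - 0) ^ 2 = w ^ 2 by ring, sqrt_sq dist_nonneg]
  have hF : MeasurePreserving (fun u : EuclideanSpace ℝ (Fin 2) => (u 0, u 1)) :=
    (volume_preserving_piFinTwo _).comp (PiLp.volume_preserving_ofLp _)
  have hpre : closedBall !₂[-(w / 2), 0] (1 / 2) ∩ closedBall !₂[w / 2, 0] (1 / 2) =
      (fun u : EuclideanSpace ℝ (Fin 2) => (u 0, u 1)) ⁻¹' lens w := by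
    ext u
    simp only [mem_inter_iff, EuclideanSpace.mem_closedBall_fin_two one_half_pos.le, mem_preimage,
      lens, mem_ofPred_eq]
    norm_num
  rw [volume_closedBall_inter_closedBall_congr hdist.symm, hpre,
    hF.measure_preimage (measurableSet_lens w).nullMeasurableSet, volume_lens dist_nonneg h]

theorem measureReal_closedBall_inter_closedBall_fin_two (x y : EuclideanSpace ℝ (Fin 2)) :
    volume.real (closedBall x (1 / 2) ∩ closedBall y (1 / 2)) = π / 4 * euclidHat (dist x y) := by
  rcases le_or_gt (dist x y) 1 with h | h
  · rw [measureReal_def, volume_closedBall_inter_closedBall_fin_two h,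
      ENNReal.toReal_ofReal (intervalIntegral.integral_nonneg h fun s _ => sqrt_nonneg _),
      euclidHat_eq_integral (by linarith [dist_nonneg (x := x) (y := y)]) h]
    field_simp
  · rw [(closedBall_disjoint_closedBall (by linarith)).inter_eq, measureReal_empty,
      euclidHat_of_one_lt h, mul_zero]

theorem abs_sum_mul_measureReal_le {α ι : Type*} [MeasurableSpace α] [Fintype ι] (μ : Measure α)
    {B : ι → Set α} (hB : ∀ i, MeasurableSet (B i)) (hB_fin : ∀ i, μ (B i) ≠ ⊤) (c : ι → ℤ) :
    |∑ i, (c i : ℝ) * μ.real (B i)| ≤ ∑ i, ∑ j, (c i * c j : ℝ) * μ.real (B i ∩ B j) := by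
  have hint (s : Set α) (hs : MeasurableSet s) (hs_fin : μ s ≠ ⊤) :
      Integrable (s.indicator (1 : α → ℝ)) μ :=
    (integrable_indicator_iff hs).2 (integrableOn_const hs_fin)
  have hint₂ (i j : ι) : Integrable ((B i ∩ B j).indicator (1 : α → ℝ)) μ :=
    hint _ ((hB i).inter (hB j)) (measure_ne_top_of_subset inter_subset_left (hB_fin i))
  set f : α → ℝ := fun u => ∑ i, (c i : ℝ) * (B i).indicator 1 u
  have hf_intCast (u : α) : ∃ m : ℤ, f u = m :=
    ⟨∑ i, c i * (B i).indicator 1 u, by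
      push_cast [f]
      refine Finset.sum_congr rfl fun i _ => ?_
      by_cases hu : u ∈ B i <;> simp [hu]⟩
  have hf_sq : (fun u => f u ^ 2) =
      fun u => ∑ i, ∑ j, (c i * c j : ℝ) * (B i ∩ B j).indicator 1 u := by
    ext u
    simp only [f, sq, Finset.sum_mul_sum, inter_indicator_one, Pi.mul_apply]
    exact Finset.sum_congr rfl fun i _ => Finset.sum_congr rfl fun j _ => by ring
  have hf : Integrable f μ :=
    integrable_finsetSum _ fun i _ => (hint _ (hB i) (hB_fin i)).const_mul _
  have hf₂ : Integrable (fun u => f u ^ 2) μ := by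
    rw [hf_sq]
    exact integrable_finsetSum _ fun i _ =>
      integrable_finsetSum _ fun j _ => (hint₂ i j).const_mul _
  have habs (u : α) : |f u| ≤ f u ^ 2 := by
    obtain ⟨m, hm⟩ := hf_intCast u
    rw [hm]
    exact_mod_cast Int.natCast_natAbs m ▸ Int.natAbs_le_self_sq m
  calc |∑ i, (c i : ℝ) * μ.real (B i)| = |∫ u, f u ∂μ| := by
        rw [integral_finsetSum _ fun i _ => (hint _ (hB i) (hB_fin i)).const_mul _]
        simp only [integral_const_mul, integral_indicator_one (hB _)]
    _ ≤ ∫ u, |f u| ∂μ := abs_integral_le_integral_abs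
    _ ≤ ∫ u, f u ^ 2 ∂μ := integral_mono hf.abs hf₂ habs
    _ = ∑ i, ∑ j, (c i * c j : ℝ) * μ.real (B i ∩ B j) := by
        rw [hf_sq, integral_finsetSum _ fun i _ =>
          integrable_finsetSum _ fun j _ => (hint₂ i j).const_mul _]
        refine Finset.sum_congr rfl fun i _ => ?_
        rw [integral_finsetSum _ fun j _ => (hint₂ i j).const_mul _]
        simp only [integral_const_mul, integral_indicator_one ((hB _).inter (hB _))]

theorem abs_sum_le_sum_sum_mul_euclidHat {ι : Type*} [Fintype ι]
    (x : ι → EuclideanSpace ℝ (Fin 2)) (c : ι → ℤ) :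
    |(∑ i, c i : ℝ)| ≤ ∑ i, ∑ j, (c i * c j : ℝ) * euclidHat (dist (x i) (x j)) := by
  have hball (z : EuclideanSpace ℝ (Fin 2)) : volume.real (closedBall z (1 / 2)) = π / 4 := by
    rw [← inter_self (closedBall z _), measureReal_closedBall_inter_closedBall_fin_two, dist_self,
      euclidHat_zero, mul_one]
  have h := abs_sum_mul_measureReal_le volume (fun i => measurableSet_closedBall)
    (fun i => measure_closedBall_lt_top.ne) c (B := fun i => closedBall (x i) (1 / 2))
  simp only [hball, measureReal_closedBall_inter_closedBall_fin_two, ← Finset.sum_mul,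
    abs_mul, abs_of_pos (by positivity : 0 < π / 4)] at h
  refine le_of_mul_le_mul_right (h.trans_eq ?_) (by positivity : 0 < π / 4)
  simp only [Finset.sum_mul]
  exact Finset.sum_congr rfl fun i _ => Finset.sum_congr rfl fun j _ => by ring

theorem Finset.sum_sum_eq_sum_add_two_nsmul_sum_lt {ι M : Type*} [Fintype ι] [LinearOrder ι]
    [AddCommMonoid M] (a : ι → ι → M) (ha : ∀ i j, a i j = a j i) :
    ∑ i, ∑ j, a i j = ∑ i, a i i + 2 • ∑ i, ∑ j ∈ univ.filter (fun j => i < j), a i j := by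
  have hsplit (i j : ι) : a i j = (if i = j then a i j else 0) +
      ((if i < j then a i j else 0) + if j < i then a i j else 0) := by
    rcases lt_trichotomy i j with h | rfl | h
    · simp [h, h.ne, h.not_gt]
    · simp
    · simp [h, h.ne', h.not_gt]
  have hlower : ∑ i, ∑ j, (if j < i then a i j else 0) = ∑ i, ∑ j, if i < j then a i j else 0 := by
    rw [Finset.sum_comm]
    simp_rw [ha]
  simp_rw [Finset.sum_filter, two_nsmul]
  conv_lhs => enter [2, i, 2, j]; rw [hsplit i j]
  simp only [Finset.sum_add_distrib, Finset.sum_ite_eq, Finset.mem_univ, if_true, hlower]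

theorem neg_half_le_energy {n : ℕ} (hn : 2 ≤ n) (x : Fin n → EuclideanSpace ℝ (Fin 2))
    (σ : Fin n → ℝ) (hσ : ∀ j, σ j = 1 ∨ σ j = -1) (hs : ∑ j, σ j ≠ 0) :
    -(1 / 2) ≤ 1 / ((n : ℝ) - 1) *
      ∑ i, ∑ j ∈ Finset.univ.filter (fun j => i < j), σ i * σ j * euclidHat ‖x i - x j‖ := by
  have hσ_intCast (j : Fin n) : ∃ m : ℤ, (m : ℝ) = σ j :=
    (hσ j).elim (fun h => ⟨1, by simp [h]⟩) fun h => ⟨-1, by simp [h]⟩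
  choose c hc using hσ_intCast
  have hc_sq (i : Fin n) : (c i : ℝ) * c i = 1 := by rcases hσ i with h | h <;> simp [hc, h]
  simp only [← hc] at hs ⊢
  have hsum : 1 ≤ |(∑ j, c j : ℝ)| := by
    rw [← Int.cast_sum] at hs ⊢
    exact_mod_cast Int.one_le_abs (by exact_mod_cast hs)
  have hdecomp := Finset.sum_sum_eq_sum_add_two_nsmul_sum_lt
    (fun i j => (c i * c j : ℝ) * euclidHat ‖x i - x j‖) fun i j => by rw [norm_sub_rev]; ring
  simp only [sub_self, norm_zero, euclidHat_zero, mul_one, hc_sq, Finset.sum_const,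
    Finset.card_univ, Fintype.card_fin, nsmul_eq_mul, Nat.cast_ofNat] at hdecomp
  have hbound := hsum.trans (abs_sum_le_sum_sum_mul_euclidHat x c)
  simp only [dist_eq_norm] at hbound
  have hn' : (1 : ℝ) < n := by exact_mod_cast hn
  rw [div_mul_eq_mul_div, one_mul, le_div_iff₀ (by linarith)]
  linarith

theorem constrained_minimal_specific_energy_euclidHat :
    sInf { e : ℝ | ∃ (n : ℕ), 2 ≤ n ∧
        ∃ (x : Fin n → EuclideanSpace ℝ (Fin 2)) (σ : Fin n → ℝ),
          (∀ j, σ j = 1 ∨ σ j = -1) ∧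
          (∑ j : Fin n, σ j) ≠ 0 ∧
          e = (1 / ((n : ℝ) - 1)) *
              ∑ i : Fin n, ∑ j ∈ Finset.univ.filter (fun j => i < j),
                σ i * σ j * euclidHat ‖x i - x j‖ } = -(1 / 2) := by
  refine IsLeast.csInf_eq ⟨⟨3, by norm_num, 0, ![1, -1, 1], fun j => ?_, ?_, ?_⟩, ?_⟩
  · fin_cases j <;> simp
  · simp [Fin.sum_univ_three]
  · simp [Finset.sum_filter, Fin.sum_univ_three, euclidHat_zero]
    norm_num
  · rintro e ⟨n, hn, x, σ, hσ, hs, rfl⟩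
    exact neg_half_le_energy hn x σ hσ hs
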